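/- arXiv:math/0411153 — 3 statements merged into one kernel-verified Lean document; each statement's English description precedes it below -/
import Mathlib

section
/- If x and y are vectors in R^n with x = P y for some doubly stochastic matrix P, then x is majorized by y. -/
open Matrix

def Majorizes {I K : Type*} [Fintype I] [Fintype K] (y : I → ℝ) (x : K → ℝ) : Prop :=
  (∀ A : Finset K, ∃ B : Finset I, B.card = A.card ∧ ∑ i ∈ A, x i ≤ ∑ i ∈ B, y i) ∧
  (∑ i, x i) = (∑ i, y i)

/-- Key lemma: if `0 ≤ t ≤ 1` and `∑ t = k`, then `∑ t j * y j` is at most the sum of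
`y` over some subset of cardinality `k`. -/
lemma exists_subset_sum_le {n : ℕ} (t y : Fin n → ℝ) (k : ℕ) (hk : k ≤ n)
    (h0 : ∀ j, 0 ≤ t j) (h1 : ∀ j, t j ≤ 1) (hs : ∑ j, t j = (k : ℝ)) :
    ∃ B : Finset (Fin n), B.card = k ∧ ∑ j, t j * y j ≤ ∑ j ∈ B, y j := by
  classical
  -- choose B maximizing ∑_{j ∈ B} y j over subsets of card k
  have hne : ((Finset.univ : Finset (Fin n)).powersetCard k).Nonempty := by
    rw [Finset.powersetCard_nonempty]
    simpa using hk
  obtain ⟨B, hBmem, hBmax⟩ := Finset.exists_max_image _ (fun B => ∑ j ∈ B, y j) hne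
  rw [Finset.mem_powersetCard_univ] at hBmem
  refine ⟨B, hBmem, ?_⟩
  -- key property: y outside B is at most y inside B
  have key : ∀ a ∈ B, ∀ b ∉ B, y b ≤ y a := by
    intro a ha b hb
    have hk1 : 1 ≤ k := hBmem ▸ Finset.one_le_card.2 ⟨a, ha⟩
    have hB' : (insert b (B.erase a)).card = k := by
      rw [Finset.card_insert_of_notMem (fun h => hb (Finset.mem_of_mem_erase h)),
        Finset.card_erase_of_mem ha, hBmem]
      omega
    have := hBmax (insert b (B.erase a)) (by rw [Finset.mem_powersetCard_univ]; exact hB')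
    rw [Finset.sum_insert (fun h => hb (Finset.mem_of_mem_erase h)),
      Finset.sum_erase_eq_sub ha] at this
    linarith
  rcases B.eq_empty_or_nonempty with rfl | hBne
  · -- k = 0, so all t j = 0
    simp only [Finset.card_empty] at hBmem
    subst hBmem
    have hz : ∀ j, t j = 0 := by
      intro j
      have := (Finset.sum_eq_zero_iff_of_nonneg (fun j _ => h0 j)).1 (by simpa using hs)
      exact this j (Finset.mem_univ j)
    have : ∑ j, t j * y j = 0 := Finset.sum_eq_zero fun j _ => by rw [hz j, zero_mul]
    simp [this]
  · set m : ℝ := B.inf' hBne y with hm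
    obtain ⟨a, haB, ham⟩ := Finset.exists_mem_eq_inf' hBne y
    have hmle : ∀ j ∈ B, m ≤ y j := fun j hj => Finset.inf'_le _ hj
    have hlem : ∀ j ∉ B, y j ≤ m := by
      intro j hj; exact (key a haB j hj).trans (le_of_eq ham.symm)
    have hsplit : ∑ j, t j * y j = ∑ j ∈ B, t j * y j + ∑ j ∈ Bᶜ, t j * y j :=
      (Finset.sum_add_sum_compl B _).symm
    have hsplit2 : ∑ j ∈ B, t j + ∑ j ∈ Bᶜ, t j = (k : ℝ) := by
      rw [Finset.sum_add_sum_compl]; exact hs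
    have h2 : ∑ j ∈ Bᶜ, t j * y j ≤ m * ∑ j ∈ Bᶜ, t j := by
      rw [Finset.mul_sum]
      refine Finset.sum_le_sum fun j hj => ?_
      rw [mul_comm m]
      exact mul_le_mul_of_nonneg_left (hlem j (by simpa using hj)) (h0 j)
    have h3 : ∑ j ∈ Bᶜ, t j = ∑ j ∈ B, (1 - t j) := by
      have : ∑ j ∈ B, (1 - t j) = (k : ℝ) - ∑ j ∈ B, t j := by
        rw [Finset.sum_sub_distrib, Finset.sum_const, hBmem, nsmul_eq_mul, mul_one]
      linarith
    have h4 : m * ∑ j ∈ B, (1 - t j) ≤ ∑ j ∈ B, (1 - t j) * y j := by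
      rw [Finset.mul_sum]
      refine Finset.sum_le_sum fun j hj => ?_
      rw [mul_comm m]
      exact mul_le_mul_of_nonneg_left (hmle j hj) (by linarith [h1 j])
    have h5 : ∑ j ∈ B, t j * y j + ∑ j ∈ B, (1 - t j) * y j = ∑ j ∈ B, y j := by
      rw [← Finset.sum_add_distrib]
      exact Finset.sum_congr rfl fun j _ => by ring
    calc ∑ j, t j * y j = ∑ j ∈ B, t j * y j + ∑ j ∈ Bᶜ, t j * y j := hsplit
      _ ≤ ∑ j ∈ B, t j * y j + m * ∑ j ∈ Bᶜ, t j := by linarith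
      _ = ∑ j ∈ B, t j * y j + m * ∑ j ∈ B, (1 - t j) := by rw [h3]
      _ ≤ ∑ j ∈ B, t j * y j + ∑ j ∈ B, (1 - t j) * y j := by linarith
      _ = ∑ j ∈ B, y j := h5

theorem majorized_of_doublyStochastic {n : ℕ} (P : Matrix (Fin n) (Fin n) ℝ)
    (hP : P ∈ doublyStochastic ℝ (Fin n)) (x y : Fin n → ℝ) (hxy : x = P *ᵥ y) :
    Majorizes y x := by
  obtain ⟨hPnn, hProw, hPcol⟩ := mem_doublyStochastic_iff_sum.1 hP
  subst hxy
  constructor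
  · intro A
    set t : Fin n → ℝ := fun j => ∑ i ∈ A, P i j with ht
    have h0 : ∀ j, 0 ≤ t j := fun j => Finset.sum_nonneg fun i _ => hPnn i j
    have h1 : ∀ j, t j ≤ 1 := by
      intro j
      calc t j ≤ ∑ i, P i j :=
            Finset.sum_le_sum_of_subset_of_nonneg (Finset.subset_univ A) (fun i _ _ => hPnn i j)
        _ = 1 := hPcol j
    have hs : ∑ j, t j = (A.card : ℝ) := by
      rw [ht]
      simp only [Finset.sum_comm (s := Finset.univ) (t := A)]
      rw [Finset.sum_congr rfl fun i _ => hProw i]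
      simp
    obtain ⟨B, hBcard, hBle⟩ := exists_subset_sum_le t y A.card
      (by simpa using A.card_le_univ) h0 h1 hs
    refine ⟨B, hBcard, ?_⟩
    have : ∑ i ∈ A, (P *ᵥ y) i = ∑ j, t j * y j := by
      simp only [mulVec, dotProduct, ht]
      rw [Finset.sum_comm]
      exact Finset.sum_congr rfl fun j _ => by rw [Finset.sum_mul]
    rw [this]; exact hBle
  · have : ∑ i, (P *ᵥ y) i = ∑ j, (∑ i, P i j) * y j := by
      simp only [mulVec, dotProduct]
      rw [Finset.sum_comm]
      exact Finset.sum_congr rfl fun j _ => by rw [Finset.sum_mul]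
    rw [this]
    exact Finset.sum_congr rfl fun j _ => by rw [hPcol j, one_mul]
end

section
/- Gale–Ryser inequality: let A be an m×n 0-1 matrix with row sums r_1 ≥ ... ≥ r_m and column sums c_1 ≥ ... ≥ c_n (sorted non-increasingly). Then the column sum sequence c is majorized by the conjugate r^T of the row sum partition. -/
/-!
Both sides count cells column by column. Counting the cells of the Young diagram of `r` in its
first `k` columns gives `∑_{t ≤ k} rᵀ t = ∑ᵢ min (r i) k`, while the ones of row `i` of `A` lying
in the first `k` columns number at most `min (r i) k`, because the entries are `0` or `1`.
For `k = n` every `min (r i) n` is `r i`, and both sides equal the total number of ones.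
-/

open Finset

theorem sum_Icc_card_filter_le_eq_sum_min {ι : Type*} (s : Finset ι) (f : ι → ℕ) (k : ℕ) :
    ∑ t ∈ Icc 1 k, #{i ∈ s | t ≤ f i} = ∑ i ∈ s, min (f i) k := by
  simp_rw [card_filter]
  rw [sum_comm]
  refine sum_congr rfl fun i _ => ?_
  rw [← card_filter, show {t ∈ Icc 1 k | t ≤ f i} = Icc 1 (min (f i) k) by ext; simp; omega,
    Nat.card_Icc, Nat.add_sub_cancel]

theorem sum_le_min_sum_card_of_le_one {ι : Type*} {s t : Finset ι} {a : ι → ℕ} (hst : s ⊆ t)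
    (ha : ∀ j ∈ s, a j ≤ 1) : ∑ j ∈ s, a j ≤ min (∑ j ∈ t, a j) #s :=
  le_min (sum_le_sum_of_subset hst) (by simpa using sum_le_card_nsmul s a 1 ha)

theorem gale_ryser_general {m n : ℕ} (A : Matrix (Fin m) (Fin n) ℕ)
    (h01 : ∀ i j, A i j = 0 ∨ A i j = 1)
    (r : Fin m → ℕ) (hr : r = fun i => ∑ j, A i j)
    (c : Fin n → ℕ) (hc : c = fun j => ∑ i, A i j)
    (rT : ℕ → ℕ)
    (hrT : rT = fun t => (Finset.univ.filter fun i : Fin m => t ≤ r i).card) :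
    (∀ k : ℕ,
      (∑ j ∈ Finset.univ.filter (fun j : Fin n => (j : ℕ) < k), c j) ≤
        ∑ t ∈ Finset.Icc 1 k, rT t) ∧
    (∑ j, c j) = (∑ t ∈ Finset.Icc 1 n, rT t) := by
  have hA : ∀ i j, A i j ≤ 1 := fun i j => by rcases h01 i j with h | h <;> omega
  have hrT_sum (k : ℕ) : ∑ t ∈ Icc 1 k, rT t = ∑ i, min (r i) k := by
    subst hrT; exact sum_Icc_card_filter_le_eq_sum_min _ _ _
  have hrow (i : Fin m) (S : Finset (Fin n)) : ∑ j ∈ S, A i j ≤ min (r i) #S :=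
    hr ▸ sum_le_min_sum_card_of_le_one (subset_univ S) fun j _ => hA i j
  have hr_le (i : Fin m) : r i ≤ n := by simpa [hr] using (hrow i univ).trans (min_le_right _ _)
  subst hc
  refine ⟨fun k => ?_, ?_⟩
  · rw [hrT_sum, sum_comm]
    refine sum_le_sum fun i _ => (hrow i _).trans (min_le_min_left _ ?_)
    exact Fin.card_filter_val_lt.trans_le (min_le_right _ _)
  · simp_rw [hrT_sum, min_eq_left (hr_le _), hr]
    exact sum_comm

theorem gale_ryser {m n : ℕ} (A : Matrix (Fin m) (Fin n) ℕ)
    (h01 : ∀ i j, A i j = 0 ∨ A i j = 1)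
    (r : Fin m → ℕ) (hr : r = fun i => ∑ j, A i j) (hrmono : Antitone r)
    (c : Fin n → ℕ) (hc : c = fun j => ∑ i, A i j) (hcmono : Antitone c)
    (rT : ℕ → ℕ)
    (hrT : rT = fun t => (Finset.univ.filter fun i : Fin m => t ≤ r i).card) :
    (∀ k : ℕ,
      (∑ j ∈ Finset.univ.filter (fun j : Fin n => (j : ℕ) < k), c j) ≤
        ∑ t ∈ Finset.Icc 1 k, rT t) ∧
    (∑ j, c j) = (∑ t ∈ Finset.Icc 1 n, rT t) :=
  gale_ryser_general A h01 r hr c hc rT hrT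
end

section
/- If G is a finite simple graph with maximum vertex degree at most 2, then the Laplacian spectrum λ(G) is majorized by the conjugate degree sequence d^T(G). -/
open Finset Matrix

theorem sum_sum_sub_sq {ι R : Type*} [CommRing R] (s : Finset ι) (x : ι → R) :
    ∑ i ∈ s, ∑ j ∈ s, (x i - x j) ^ 2 = 2 * #s * ∑ i ∈ s, x i ^ 2 - 2 * (∑ i ∈ s, x i) ^ 2 := by
  simp_rw [sub_sq, sum_add_distrib, sum_sub_distrib, sum_const, nsmul_eq_mul, ← mul_sum,
    ← sum_mul, mul_assoc, ← mul_sum]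
  ring

theorem Matrix.IsHermitian.eigenvalues_le_of_forall_dotProduct_le {n : Type*} [Fintype n]
    [DecidableEq n] {A : Matrix n n ℝ} (hA : A.IsHermitian) {c : ℝ}
    (hc : ∀ x, x ⬝ᵥ A *ᵥ x ≤ c * (x ⬝ᵥ x)) (i : n) : hA.eigenvalues i ≤ c := by
  have hunit : ⇑(hA.eigenvectorBasis i) ⬝ᵥ ⇑(hA.eigenvectorBasis i) = 1 := by
    have := hA.eigenvectorBasis.orthonormal.1 i
    rw [EuclideanSpace.norm_eq] at this
    simpa [dotProduct, ← sq, Real.sqrt_eq_one] using this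
  simpa [hA.eigenvalues_eq, hunit] using hc (hA.eigenvectorBasis i)

section Conjugate

variable {V : Type*} [Fintype V]

/-- `conjugate d n i` is `d^T_{i+1}`: entries are indexed from `0`. -/
def conjugate (d : V → ℕ) (n : ℕ) (i : Fin n) : ℕ :=
  #{v | (i : ℕ) + 1 ≤ d v}

theorem sum_conjugate {d : V → ℕ} {n : ℕ} (hd : ∀ v, d v ≤ n) :
    ∑ i, conjugate d n i = ∑ v, d v := by
  simp only [conjugate, card_filter]
  rw [sum_comm]
  refine sum_congr rfl fun v _ => ?_
  rw [← card_filter]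
  simpa [Nat.add_one_le_iff, Fin.card_filter_val_lt] using hd v

theorem conjugate_eq_zero {d : V → ℕ} {n : ℕ} {i : Fin n}
    (hi : ∀ v, d v ≤ i) : conjugate d n i = 0 := by
  simpa [conjugate, filter_eq_empty_iff, Nat.add_one_le_iff] using hi

theorem conjugate_zero (d : V → ℕ) {n : ℕ} (hn : 0 < n) :
    conjugate d n ⟨0, hn⟩ = #{v | 0 < d v} :=
  rfl

end Conjugate

theorem majorizes_of_supported_on_first_two {n : ℕ} (y x : Fin n → ℝ) (hx : ∀ k, 0 ≤ x k)
    (hxy : ∀ k, x k ≤ y ⟨0, k.pos⟩) (hy : ∀ i : Fin n, 2 ≤ (i : ℕ) → y i = 0)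
    (hsum : ∑ k, x k = ∑ i, y i) : Majorizes y x := by
  refine ⟨fun A => ?_, hsum⟩
  set B : Finset (Fin n) := {i | (i : ℕ) < #A}
  refine ⟨B, by simpa [B, Fin.card_filter_val_lt] using A.card_le_univ, ?_⟩
  obtain hA | hA | hA : #A = 0 ∨ #A = 1 ∨ 2 ≤ #A := by omega
  · simp [B, card_eq_zero.1 hA]
  · obtain ⟨a, rfl⟩ := card_eq_one.1 hA
    have : B = {⟨0, a.pos⟩} := by ext i; simp [B, Fin.ext_iff]
    simpa [this] using hxy a
  · calc ∑ k ∈ A, x k ≤ ∑ k, x k :=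
          sum_le_sum_of_subset_of_nonneg A.subset_univ fun k _ _ => hx k
      _ = ∑ i, y i := hsum
      _ = ∑ i ∈ B, y i :=
          (sum_subset (subset_univ _) fun i _ hi => hy i (by simp [B] at hi; omega)).symm

namespace SimpleGraph

variable {V : Type*} [Fintype V] (G : SimpleGraph V) [DecidableRel G.Adj]

theorem trace_lapMatrix {R : Type*} [Ring R] [DecidableEq V] :
    (G.lapMatrix R).trace = ∑ v, (G.degree v : R) := by
  simp [Matrix.trace, lapMatrix, degMatrix]

theorem sum_adj_sub_sq_le (x : V → ℝ) :
    ∑ i, ∑ j, (if G.Adj i j then (x i - x j) ^ 2 else 0) ≤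
      ∑ i ∈ {v | 0 < G.degree v}, ∑ j ∈ {v | 0 < G.degree v}, (x i - x j) ^ 2 := by
  set S : Finset V := {v | 0 < G.degree v}
  have hS {i j : V} (h : (if G.Adj i j then (x i - x j) ^ 2 else 0) ≠ 0) : i ∈ S ∧ j ∈ S := by
    have hij : G.Adj i j := by by_contra hij; simp [hij] at h
    simpa [S, G.degree_pos_iff_exists_adj] using ⟨⟨j, hij⟩, ⟨i, hij.symm⟩⟩
  calc ∑ i, ∑ j, (if G.Adj i j then (x i - x j) ^ 2 else 0)
      = ∑ i ∈ S, ∑ j ∈ S, (if G.Adj i j then (x i - x j) ^ 2 else 0) := by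
        refine (sum_subset S.subset_univ fun i _ hi => ?_).symm.trans
          (sum_congr rfl fun i _ => (sum_subset S.subset_univ fun j _ hj => ?_).symm)
        · exact sum_eq_zero fun j _ => not_not.1 fun h => hi (hS h).1
        · exact not_not.1 fun h => hj (hS h).2
    _ ≤ ∑ i ∈ S, ∑ j ∈ S, (x i - x j) ^ 2 :=
        sum_le_sum fun i _ => sum_le_sum fun j _ => by split_ifs; exacts [le_rfl, sq_nonneg _]

theorem dotProduct_lapMatrix_mulVec_le [DecidableEq V] (x : V → ℝ) :
    x ⬝ᵥ G.lapMatrix ℝ *ᵥ x ≤ #{v | 0 < G.degree v} * (x ⬝ᵥ x) := by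
  set S : Finset V := {v | 0 < G.degree v}
  rw [← toLinearMap₂'_apply', lapMatrix_toLinearMap₂', div_le_iff₀ two_pos]
  calc ∑ i, ∑ j, (if G.Adj i j then (x i - x j) ^ 2 else 0)
      ≤ ∑ i ∈ S, ∑ j ∈ S, (x i - x j) ^ 2 := G.sum_adj_sub_sq_le x
    _ = 2 * #S * ∑ i ∈ S, x i ^ 2 - 2 * (∑ i ∈ S, x i) ^ 2 := sum_sum_sub_sq S x
    _ ≤ 2 * #S * ∑ i, x i ^ 2 := by
      have : ∑ i ∈ S, x i ^ 2 ≤ ∑ i, x i ^ 2 :=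
        sum_le_sum_of_subset_of_nonneg S.subset_univ fun i _ _ => sq_nonneg (x i)
      nlinarith [sq_nonneg (∑ i ∈ S, x i)]
    _ = #S * (x ⬝ᵥ x) * 2 := by simp only [dotProduct, sq]; ring

end SimpleGraph

theorem groneMerris_maxDegree_two {n : ℕ} (G : SimpleGraph (Fin n)) [DecidableRel G.Adj]
    (hdeg : ∀ v, G.degree v ≤ 2) (h : (G.lapMatrix ℝ).IsHermitian) :
    Majorizes
      (fun i : Fin n => ((Finset.univ.filter fun v => (i : ℕ) + 1 ≤ G.degree v).card : ℝ))
      h.eigenvalues := by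
  have hdeg_le_card (v : Fin n) : G.degree v ≤ n := by simpa using (G.degree_lt_card_verts v).le
  change Majorizes (fun i => (conjugate (fun v => G.degree v) n i : ℝ)) h.eigenvalues
  refine majorizes_of_supported_on_first_two _ _ (G.posSemidef_lapMatrix ℝ).eigenvalues_nonneg
    (fun k => ?_) (fun i hi => ?_) ?_
  · rw [conjugate_zero]
    exact h.eigenvalues_le_of_forall_dotProduct_le G.dotProduct_lapMatrix_mulVec_le k
  · exact_mod_cast conjugate_eq_zero fun v => (hdeg v).trans hi
  · rw [← Nat.cast_sum, sum_conjugate hdeg_le_card, Nat.cast_sum, ← G.trace_lapMatrix,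
      h.trace_eq_sum_eigenvalues]
    simp
end
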